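/- arXiv:1212.3849 — 2 statements merged into one kernel-verified Lean document; each statement's English description precedes it below -/
import Mathlib

section
/- If Q : F_p^n → ℝ/ℤ is a non-classical polynomial of degree d ≥ 1, then pQ (the p-fold sum of Q with itself in ℝ/ℤ) is a non-classical polynomial of degree ≤ max(d − p + 1, 0). -/
open scoped BigOperators

noncomputable section

/-- The circle group `𝕋 = ℝ/ℤ`. -/
abbrev 𝕋 : Type := AddCircle (1 : ℝ)

/-- The character `e(x) = e^{2πix}` on `𝕋`, valued in `ℂ`. -/
def ee (x : 𝕋) : ℂ := (AddCircle.toCircle x : ℂ)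

/-- The average `E_{x ∈ α}[f(x)]` of a complex-valued function on a finite type. -/
def cavg {α : Type*} [Fintype α] (f : α → ℂ) : ℂ := (∑ x, f x) / (Fintype.card α : ℂ)

/-- The average of a real-valued function on a finite type. -/
def ravg {α : Type*} [Fintype α] (f : α → ℝ) : ℝ := (∑ x, f x) / (Fintype.card α : ℝ)

/-- Multiplicative derivative `Δ_h f (x) = f(x+h) conj (f x)`. -/
def mDeriv {G : Type*} [Add G] (h : G) (f : G → ℂ) : G → ℂ :=
  fun x => f (x + h) * (starRingEnd ℂ) (f x)

/-- `E_{h_1,…,h_d,x}[(Δ_{h_1} ⋯ Δ_{h_d} f)(x)]`. -/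
def gowersAvg {G : Type*} [AddCommGroup G] [Fintype G] : ℕ → (G → ℂ) → ℂ
  | 0, f => cavg f
  | d + 1, f => cavg fun h => gowersAvg d (mDeriv h f)

/-- The Gowers norm `‖f‖_{U^d} = |E_{h_1,…,h_d,x}[(Δ_{h_1} ⋯ Δ_{h_d} f)(x)]|^{1/2^d}`. -/
def gowersNorm {G : Type*} [AddCommGroup G] [Fintype G] (d : ℕ) (f : G → ℂ) : ℝ :=
  ‖gowersAvg d f‖ ^ ((1 : ℝ) / 2 ^ d)

/-- Additive derivative `D_h P (x) = P(x+h) - P(x)`. -/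
def aDeriv {G M : Type*} [Add G] [Sub M] (h : G) (P : G → M) : G → M :=
  fun x => P (x + h) - P x

/-- Iterated additive derivative `D_{h_1} ⋯ D_{h_k} P`. -/
def iterADeriv {G M : Type*} [AddCommGroup G] [AddCommGroup M] :
    {k : ℕ} → (Fin k → G) → (G → M) → (G → M)
  | 0, _, P => P
  | _ + 1, h, P => aDeriv (h 0) (iterADeriv (Fin.tail h) P)

/-- `P` is a (non-classical) polynomial of degree ≤ `d`:
all `(d+1)`-fold additive derivatives vanish identically. -/
def IsPolyDeg {G M : Type*} [AddCommGroup G] [AddCommGroup M] (d : ℕ) (P : G → M) : Prop :=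
  ∀ (h : Fin (d + 1) → G) (x : G), iterADeriv h P x = 0

/-- `P` has degree exactly `d`. -/
def ExactDeg {G M : Type*} [AddCommGroup G] [AddCommGroup M] (d : ℕ) (P : G → M) : Prop :=
  IsPolyDeg d P ∧ ∀ d' < d, ¬ IsPolyDeg d' P

/-- The degree of a polynomial: the least `d` with `IsPolyDeg d P`. -/
def polyDeg {G M : Type*} [AddCommGroup G] [AddCommGroup M] (P : G → M) : ℕ :=
  sInf {d | IsPolyDeg d P}

/-- `P` has `d`-rank at most `r`: `P = Γ(Q_1,…,Q_r)` with the `Q_i` of degree ≤ `d-1`. -/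
def HasRankLE {G : Type*} [AddCommGroup G] (d : ℕ) (P : G → 𝕋) (r : ℕ) : Prop :=
  ∃ (Q : Fin r → G → 𝕋) (Γ : (Fin r → 𝕋) → 𝕋),
    (∀ i, IsPolyDeg (d - 1) (Q i)) ∧ ∀ x, P x = Γ fun i => Q i x

/-- The `d`-rank of `P`, in `ℕ∞` (`⊤` if no finite decomposition exists;
for `d = 1` this is `⊤` exactly when `P` is non-constant). -/
def rankd {G : Type*} [AddCommGroup G] (d : ℕ) (P : G → 𝕋) : ℕ∞ :=
  sInf {r : ℕ∞ | ∃ m : ℕ, r = m ∧ HasRankLE d P m}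

/-- `P` has depth exactly `k` (shift zero): values in `U_{k+1} = (1/p^{k+1})ℤ/ℤ` but not all
in `U_k`. -/
def ExactDepth {G : Type*} (p k : ℕ) (P : G → 𝕋) : Prop :=
  (∀ x, (p ^ (k + 1)) • P x = 0) ∧ ¬ (∀ x, (p ^ k) • P x = 0)

/-- Application of a linear form `L = (w_t)_t` to a tuple of points of `F_p^n`:
`(x_t)_t ↦ ∑_t w_t x_t`. -/
def formApply {p : ℕ} {ι : Type*} [Fintype ι] {n : ℕ} (L : ι → ZMod p)
    (x : ι → Fin n → ZMod p) : Fin n → ZMod p := ∑ t, L t • x t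

/-- The `(d,k)`-dependency set of a system of forms `L`: the tuples
`(λ_j) ∈ [0, p^{k+1}-1]^m` with `∑_j λ_j P(L_j(x)) ≡ 0` for every non-classical polynomial `P`
of degree `d` and depth `k` (over every `F_p^n`). -/
def DepSet (p k d : ℕ) {ι μ : Type*} [Fintype ι] [Fintype μ]
    (L : μ → ι → ZMod p) : Set (μ → ℕ) :=
  {lam | (∀ j, lam j < p ^ (k + 1)) ∧
    ∀ (n : ℕ) (P : (Fin n → ZMod p) → 𝕋), ExactDeg d P → ExactDepth p k P →
      ∀ x : ι → Fin n → ZMod p, (∑ j, lam j • P (formApply (L j) x)) = 0}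

/-- `b_1,…,b_m ∈ 𝕋^κ` are consistent with the forms `L` with respect to degree data `dd`
and depth data `kk`. -/
def ConsistentWith (p : ℕ) {ι κ : Type*} [Fintype ι] [Fintype κ] {m : ℕ}
    (L : Fin m → ι → ZMod p) (dd kk : κ → ℕ) (b : Fin m → κ → 𝕋) : Prop :=
  ∀ i : κ, (∀ j, (p ^ (kk i + 1)) • b j i = 0) ∧
    ∀ lam ∈ DepSet p (kk i) (dd i) L, (∑ j, lam j • b j i) = 0

/-- The polynomial factor defined by `P_1,…,P_C` with depths `k_1,…,k_C` has rank greater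
than `r`: every integer combination `∑ λ_i P_i`, with the `λ_i` not all divisible by the
respective `p^{k_i+1}`, has `D`-rank > `r` where `D = max_i deg(λ_i P_i)`. -/
def FactorRankGT (p : ℕ) {G : Type*} [AddCommGroup G] {C : ℕ}
    (P : Fin C → G → 𝕋) (k : Fin C → ℕ) (r : ℕ) : Prop :=
  ∀ lam : Fin C → ℤ, (∃ i, ¬ ((p : ℤ) ^ (k i + 1) ∣ lam i)) →
    (r : ℕ∞) < rankd (Finset.univ.sup fun i => polyDeg fun x => lam i • P i x)
      (fun x => ∑ i, lam i • P i x)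

/-- Cauchy–Schwarz complexity ≤ `d`: for each `i`, the remaining forms can be partitioned into
`d+1` classes, with `L_i` outside the linear span of each class. -/
def CSComplexityLE (p : ℕ) {m : ℕ} {ι : Type*} [Fintype ι] (d : ℕ)
    (L : Fin m → ι → ZMod p) : Prop :=
  ∀ i, ∃ c : Fin m → Fin (d + 1), ∀ t,
    L i ∉ Submodule.span (ZMod p) {v | ∃ j, j ≠ i ∧ c j = t ∧ v = L j}


/-!
For `d ≥ p` the bound passes to derivatives, since `D_g (p • Q) = p • D_g Q`. For `d < p`,
induction makes each `p • D_g Q` constant, and writing `h = D_g Q`,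
`p • h x = ∑_{k<p} h (x + k • g) - ∑_{k<p} (h (x + k • g) - h x)`.
The first sum telescopes to `Q (x + p • g) - Q x = 0`. The second is the sum over the line
`x + ℤ g ≅ 𝔽_p` of a `p`-torsion valued function whose `(p-1)`-th difference vanishes; as
`(-1)^(p-1-k) * (p-1).choose k ≡ 1 [ZMOD p]`, that sum equals the `(p-1)`-th difference at `x`.
-/

open Finset

section IterADeriv

variable {G M : Type*} [AddCommGroup G] [AddCommGroup M]

lemma aDeriv_comm (g h : G) (P : G → M) :
    aDeriv g (aDeriv h P) = aDeriv h (aDeriv g P) := by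
  funext x
  simp only [aDeriv]
  rw [add_right_comm x g h]
  abel

lemma aDeriv_nsmul (m : ℕ) (g : G) (P : G → M) :
    aDeriv g (fun x => m • P x) = fun x => m • aDeriv g P x := by
  funext x
  simp only [aDeriv, smul_sub]

lemma iterADeriv_aDeriv : ∀ {k : ℕ} (h : Fin k → G) (g : G) (P : G → M),
    iterADeriv h (aDeriv g P) = aDeriv g (iterADeriv h P)
  | 0, _, _, _ => rfl
  | k + 1, h, g, P => by
    change aDeriv (h 0) (iterADeriv (Fin.tail h) (aDeriv g P)) = _
    rw [iterADeriv_aDeriv (Fin.tail h) g P, aDeriv_comm]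
    rfl

lemma iterADeriv_const (m : ℕ) (g : G) (P : G → M) :
    iterADeriv (fun _ : Fin m => g) P = (fwdDiff g)^[m] P := by
  induction m with
  | zero => rfl
  | succ m ih =>
    change aDeriv g (iterADeriv (fun _ : Fin m => g) P) = _
    rw [ih, Function.iterate_succ_apply']
    rfl

lemma isPolyDeg_succ_iff {d : ℕ} {P : G → M} :
    IsPolyDeg (d + 1) P ↔ ∀ g, IsPolyDeg d (aDeriv g P) := by
  constructor
  · intro hP g h x
    rw [iterADeriv_aDeriv]
    simpa only [iterADeriv, Fin.cons_zero, Fin.tail_cons] using hP (Fin.cons g h) x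
  · intro hP h x
    change aDeriv (h 0) (iterADeriv (Fin.tail h) P) x = 0
    rw [← iterADeriv_aDeriv]
    exact hP (h 0) (Fin.tail h) x

lemma isPolyDeg_zero_iff {P : G → M} : IsPolyDeg 0 P ↔ ∀ g x, aDeriv g P x = 0 :=
  ⟨fun hP g x => hP (fun _ => g) x, fun hP h x => hP (h 0) x⟩

lemma IsPolyDeg.apply_eq_apply {P : G → M} (hP : IsPolyDeg 0 P) (x y : G) : P x = P y := by
  have h := isPolyDeg_zero_iff.mp hP (x - y) y
  rwa [aDeriv, add_sub_cancel, sub_eq_zero] at h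

lemma IsPolyDeg.isPolyDeg_aDeriv {d : ℕ} {P : G → M} (hP : IsPolyDeg d P) (g : G) :
    IsPolyDeg d (aDeriv g P) := by
  intro h x
  rw [iterADeriv_aDeriv]
  exact sub_eq_zero.mpr ((hP h (x + g)).trans (hP h x).symm)

lemma IsPolyDeg.mono {d e : ℕ} {P : G → M} (hP : IsPolyDeg d P) (hde : d ≤ e) :
    IsPolyDeg e P := by
  induction e, hde using Nat.le_induction with
  | base => exact hP
  | succ e _ ih => exact isPolyDeg_succ_iff.mpr ih.isPolyDeg_aDeriv

lemma IsPolyDeg.fwdDiff_iter_succ_eq_zero {d : ℕ} {P : G → M} (hP : IsPolyDeg d P) (g : G) :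
    (fwdDiff g)^[d + 1] P = 0 :=
  funext fun x => by rw [← iterADeriv_const]; exact hP _ x

lemma fwdDiff_iter_sub_const {n : ℕ} (hn : n ≠ 0) (g : G) (f : G → M) (c : M) :
    (fwdDiff g)^[n] (fun y => f y - c) = (fwdDiff g)^[n] f := by
  obtain ⟨m, rfl⟩ := Nat.exists_eq_succ_of_ne_zero hn
  rw [Function.iterate_succ_apply, Function.iterate_succ_apply]
  congr 1
  exact funext fun y => sub_sub_sub_cancel_right _ _ _

end IterADeriv

section Prime

variable {p : ℕ} [Fact p.Prime]

lemma ZMod.natCast_choose_pred {k : ℕ} (hk : k < p) :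
    ((p - 1).choose k : ZMod p) = (-1) ^ k := by
  induction k with
  | zero => simp
  | succ k ih =>
    have hpascal : p.choose (k + 1) = (p - 1).choose k + (p - 1).choose (k + 1) := by
      conv_lhs => rw [← Nat.sub_add_cancel (Fact.out : p.Prime).one_le]
      exact Nat.choose_succ_succ _ _
    have hvanish : (p.choose (k + 1) : ZMod p) = 0 :=
      (ZMod.natCast_eq_zero_iff _ _).mpr
        ((Fact.out : p.Prime).dvd_choose_self k.succ_ne_zero hk)
    rw [hpascal, Nat.cast_add, ih (by omega)] at hvanish
    rw [pow_succ, mul_neg_one]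
    exact eq_neg_of_add_eq_zero_right hvanish

variable {G M : Type*} [AddCommGroup G] [AddCommGroup M]

lemma sum_range_shift_eq_zero_of_fwdDiff_iter_pred {f : G → M} (hf : ∀ y, p • f y = 0)
    {g x : G} (hfg : (fwdDiff g)^[p - 1] f x = 0) :
    ∑ k ∈ range p, f (x + k • g) = 0 := by
  rw [fwdDiff_iter_eq_sum_shift, Nat.sub_add_cancel (Fact.out : p.Prime).one_le] at hfg
  rw [← hfg]
  refine sum_congr rfl fun k hk => ?_
  have hkp := mem_range.mp hk
  have hcoeff : ((-1) ^ (p - 1 - k) * (p - 1).choose k : ℤ) ≡ 1 [ZMOD p] := by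
    rw [← ZMod.intCast_eq_intCast_iff]
    push_cast
    rw [ZMod.natCast_choose_pred hkp, ← pow_add, Nat.sub_add_cancel (by omega),
      ZMod.pow_card_sub_one_eq_one (neg_ne_zero.mpr one_ne_zero)]
  have horder : addOrderOf (f (x + k • g)) ∣ p := addOrderOf_dvd_iff_nsmul_eq_zero.mpr (hf _)
  exact ((zsmul_eq_zsmul_iff_modEq.mpr
    (hcoeff.of_dvd (Int.natCast_dvd_natCast.mpr horder))).trans (one_zsmul _)).symm

lemma IsPolyDeg.nsmul_aDeriv_eq_zero {Q : G → M} (hQ : IsPolyDeg (p - 1) Q) {g : G}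
    (hg : p • g = 0) (hconst : IsPolyDeg 0 fun x => p • aDeriv g Q x) (x : G) :
    p • aDeriv g Q x = 0 := by
  set h := aDeriv g Q
  have htelescope : ∑ k ∈ range p, h (x + k • g) = 0 := by
    have := sum_range_sub (fun k => Q (x + k • g)) p
    simp only [succ_nsmul, ← add_assoc, hg, add_zero, zero_nsmul, sub_self] at this
    exact this
  have herror : ∑ k ∈ range p, (h (x + k • g) - h x) = 0 := by
    refine sum_range_shift_eq_zero_of_fwdDiff_iter_pred (f := fun y => h y - h x)
      (fun y => ?_) ?_
    · rw [smul_sub, sub_eq_zero]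
      exact hconst.apply_eq_apply y x
    · have hp1 : p - 1 ≠ 0 := by have := (Fact.out : p.Prime).two_le; omega
      rw [fwdDiff_iter_sub_const hp1]
      change (fwdDiff g)^[p - 1] (fwdDiff g Q) x = 0
      rw [← Function.iterate_succ_apply, hQ.fwdDiff_iter_succ_eq_zero]
      rfl
  rw [sum_sub_distrib, htelescope, sum_const, card_range, zero_sub, neg_eq_zero] at herror
  exact herror

theorem IsPolyDeg.nsmul_prime (hG : ∀ g : G, p • g = 0) {d : ℕ} {Q : G → M}
    (hQ : IsPolyDeg d Q) : IsPolyDeg (d - (p - 1)) fun x => p • Q x := by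
  induction d generalizing Q with
  | zero =>
    rw [Nat.zero_sub, isPolyDeg_zero_iff]
    intro g x
    simp only [aDeriv_nsmul, isPolyDeg_zero_iff.mp hQ g x, smul_zero]
  | succ d ih =>
    have hderiv : ∀ g, IsPolyDeg (d - (p - 1)) (aDeriv g fun x => p • Q x) := fun g => by
      rw [aDeriv_nsmul]
      exact ih (isPolyDeg_succ_iff.mp hQ g)
    rcases le_or_gt (p - 1) d with hpd | hdp
    · rw [show d + 1 - (p - 1) = d - (p - 1) + 1 by omega]
      exact isPolyDeg_succ_iff.mpr hderiv
    · rw [show d + 1 - (p - 1) = 0 by omega, isPolyDeg_zero_iff]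
      intro g x
      rw [aDeriv_nsmul]
      refine (hQ.mono (by omega)).nsmul_aDeriv_eq_zero (hG g) ?_ x
      rw [← aDeriv_nsmul, ← show d - (p - 1) = 0 by omega]
      exact hderiv g

end Prime

theorem mulp_degree_general (p : ℕ) [Fact p.Prime] (n d : ℕ)
    (Q : (Fin n → ZMod p) → 𝕋) (hQ : ExactDeg d Q) :
    IsPolyDeg (d - (p - 1)) (fun x => p • Q x) :=
  hQ.1.nsmul_prime fun g => by ext i; simp

/-- If `Q : F_p^n → ℝ/ℤ` is a non-classical polynomial of degree `d ≥ 1`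
(with shift zero, taking values in `U_{k+1}`), then `pQ` is a non-classical polynomial of
degree ≤ `max (d - p + 1) 0` (i.e. `d - (p-1)` with truncated subtraction). -/
theorem mulp_degree (p : ℕ) [Fact p.Prime] (n d : ℕ) (hd : 1 ≤ d)
    (Q : (Fin n → ZMod p) → 𝕋) (hQ : ExactDeg d Q)
    (k : ℕ) (hshift : ∀ x, (p ^ (k + 1)) • Q x = 0) :
    IsPolyDeg (d - (p - 1)) (fun x => p • Q x) :=
  mulp_degree_general p n d Q hQ

end
end

section
/- Let B be a polynomial factor of degree d, complexity C, and rank greater than r(d,ε) (the rank from the bias-implies-low-rank theorem), defined by polynomials P_1,...,P_C with degrees d_i and depths k_i. Let A = (L_1,...,L_m) be an affine constraint on ℓ variables, and let b_1,...,b_m ∈ 𝕋^C be atoms of B that are B-consistent with A. Then Pr_{x_1,...,x_ℓ}[∀j ∈ [m], (P_1(L_j(x)),...,P_C(L_j(x))) = b_j] = (∏_{i=1}^C |Λ_i|)/‖B‖^m ± ε, where Λ_i is the (d_i,k_i)-dependency set of A and ‖B‖ = ∏_i p^{k_i+1}. -/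
/-!
Each `P_i(L_j x) - b_{j,i}` lies in `U_{k_i+1}`, so its vanishing is detected by averaging
`e(λ (P_i(L_j x) - b_{j,i}))` over `λ < p^{k_i+1}`. Multiplying these expansions out writes the
number of solutions as the average, over all frequency matrices `(λ_{i,j})`, of the exponential
sums `∑_x e(∑ λ_{i,j} (P_i(L_j x) - b_{j,i}))`. When every row `λ_i` lies in the dependency set
`Λ_i`, both `∑ λ_{i,j} P_i(L_j x)` and, by consistency, `∑ λ_{i,j} b_{j,i}` vanish, so the sum is
the number of points; these frequencies give the main term `∏ |Λ_i| / ‖B‖^m`. By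
near-orthogonality every other frequency contributes less than `ε` times the number of points.
-/

open scoped BigOperators

noncomputable section

open Finset

lemma ee_zero : ee 0 = 1 := by
  simp [ee]

lemma ee_add (x y : 𝕋) : ee (x + y) = ee x * ee y := by
  simp [ee, AddCircle.toCircle_add]

lemma ee_nsmul (t : ℕ) (x : 𝕋) : ee (t • x) = ee x ^ t := by
  simp [ee, AddCircle.toCircle_nsmul]

lemma ee_sum {α : Type*} (s : Finset α) (f : α → 𝕋) :
    ee (∑ a ∈ s, f a) = ∏ a ∈ s, ee (f a) := by
  induction s using Finset.cons_induction with
  | empty => simpa using ee_zero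
  | cons a s ha ih => rw [sum_cons, prod_cons, ee_add, ih]

lemma norm_ee (x : 𝕋) : ‖ee x‖ = 1 := Circle.norm_coe _

lemma ee_eq_one_iff {x : 𝕋} : ee x = 1 ↔ x = 0 := by
  rw [ee, Circle.coe_eq_one, ← AddCircle.toCircle_zero (T := 1)]
  exact (AddCircle.injective_toCircle one_ne_zero).eq_iff

lemma norm_sum_ee_sub {X : Type*} [Fintype X] [Nonempty X] (A : X → 𝕋) (c : 𝕋) :
    ‖∑ x, ee (A x - c)‖ = Fintype.card X * ‖cavg fun x => ee (A x)‖ := by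
  have hsum : ∑ x, ee (A x - c) = (∑ x, ee (A x)) * ee (-c) := by
    simp only [sub_eq_add_neg, ee_add, sum_mul]
  rw [hsum, norm_mul, norm_ee, mul_one, cavg, norm_div, Complex.norm_natCast,
    mul_div_cancel₀]
  exact_mod_cast Fintype.card_ne_zero

lemma sum_range_ee_nsmul {q : ℕ} {y : 𝕋} (hy : q • y = 0) :
    ∑ t ∈ range q, ee (t • y) = if y = 0 then (q : ℂ) else 0 := by
  simp_rw [ee_nsmul]
  split_ifs with h
  · simp [h, ee_zero]
  · have hroot : ee y ^ q = 1 := by rw [← ee_nsmul, hy, ee_zero]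
    have hgeom := geom_sum_mul (ee y) q
    rw [hroot, sub_self] at hgeom
    exact (mul_eq_zero.mp hgeom).resolve_right (sub_ne_zero.mpr (mt ee_eq_one_iff.mp h))

lemma boole_forall_eq_zero_eq_sum_ee {ι μ : Type*} [Fintype ι] [DecidableEq ι] [Fintype μ]
    [DecidableEq μ] (q : ι → ℕ) (hq : ∀ i, 0 < q i) (y : ι → μ → 𝕋)
    (hy : ∀ i j, q i • y i j = 0) :
    (if ∀ i j, y i j = 0 then (1 : ℂ) else 0) =
      (∑ g ∈ Fintype.piFinset fun i => Fintype.piFinset fun _ : μ => range (q i),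
          ee (∑ i, ∑ j, g i j • y i j)) / ∏ i, (q i : ℂ) ^ Fintype.card μ := by
  have hfactor : ∀ i j, (if y i j = 0 then (1 : ℂ) else 0) =
      (∑ t ∈ range (q i), ee (t • y i j)) / q i := fun i j => by
    rw [sum_range_ee_nsmul (hy i j)]
    split_ifs <;> simp [(hq i).ne']
  calc (if ∀ i j, y i j = 0 then (1 : ℂ) else 0)
      = ∏ i, ∏ j, (if y i j = 0 then (1 : ℂ) else 0) := by
        simp only [prod_boole, mem_univ, true_implies]
    _ = (∏ i, ∏ j, ∑ t ∈ range (q i), ee (t • y i j)) / ∏ i, (q i : ℂ) ^ Fintype.card μ := by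
        simp only [hfactor, prod_div_distrib, prod_const, card_univ]
    _ = _ := by
        simp only [prod_univ_sum, ee_sum]

lemma card_filter_forall_eq_zero_eq_sum_ee {X ι μ : Type*} [Fintype X] [Fintype ι]
    [DecidableEq ι] [Fintype μ] [DecidableEq μ] (q : ι → ℕ) (hq : ∀ i, 0 < q i)
    (y : X → ι → μ → 𝕋) (hy : ∀ x i j, q i • y x i j = 0) :
    (#{x | ∀ i j, y x i j = 0} : ℂ) =
      (∑ g ∈ Fintype.piFinset fun i => Fintype.piFinset fun _ : μ => range (q i),
          ∑ x, ee (∑ i, ∑ j, g i j • y x i j)) / ∏ i, (q i : ℂ) ^ Fintype.card μ := by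
  rw [natCast_card_filter, sum_comm, sum_div]
  exact sum_congr rfl fun x _ => boole_forall_eq_zero_eq_sum_ee q hq (y x) (hy x)

lemma card_filter_forall_mem_piFinset {ι α : Type*} [Fintype ι] [DecidableEq ι]
    (t : ι → Finset α) (s : ι → Set α) (hs : ∀ i, s i ⊆ t i)
    [∀ i, DecidablePred (· ∈ s i)] :
    #{g ∈ Fintype.piFinset t | ∀ i, g i ∈ s i} = ∏ i, (s i).ncard := by
  have hfin : ∀ i, (s i).Finite := fun i => (t i).finite_toSet.subset (hs i)
  have hfilter : {g ∈ Fintype.piFinset t | ∀ i, g i ∈ s i} =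
      Fintype.piFinset fun i => (hfin i).toFinset := by
    ext g
    simp only [mem_filter, Fintype.mem_piFinset, Set.Finite.mem_toFinset]
    exact ⟨And.right, fun h => ⟨fun i => hs i (h i), h⟩⟩
  rw [hfilter, Fintype.card_piFinset]
  exact prod_congr rfl fun i _ => (Set.ncard_eq_toFinset_card (s i) (hfin i)).symm

lemma abs_div_sub_card_filter_div_le {α : Type*} {F : Finset α} (good : α → Prop)
    [DecidablePred good] (S : α → ℂ) {c N ε : ℝ} (hc : (c : ℂ) = (∑ g ∈ F, S g) / #F)
    (hN : 0 < N) (hε : 0 ≤ ε) (hgood : ∀ g ∈ F, good g → S g = N)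
    (hbad : ∀ g ∈ F, ¬ good g → ‖S g‖ ≤ ε * N) :
    |c / N - #{g ∈ F | good g} / #F| ≤ ε := by
  rcases F.eq_empty_or_nonempty with rfl | hF
  · simp_all
  have hF0 : (#F : ℂ) ≠ 0 := by exact_mod_cast hF.card_pos.ne'
  have hN0 : (N : ℂ) ≠ 0 := by exact_mod_cast hN.ne'
  have hsplit : ∑ g ∈ F, S g = #{g ∈ F | good g} * N + ∑ g ∈ F with ¬ good g, S g := by
    rw [← sum_filter_add_sum_filter_not F good, sum_congr rfl fun g hg =>
      hgood g (mem_filter.mp hg).1 (mem_filter.mp hg).2, sum_const, nsmul_eq_mul]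
  have herror : ((c / N - #{g ∈ F | good g} / #F : ℝ) : ℂ) =
      (∑ g ∈ F with ¬ good g, S g) / (#F * N) := by
    push_cast
    rw [hc, hsplit]
    field_simp
    ring
  have hbound : ‖∑ g ∈ F with ¬ good g, S g‖ ≤ #F * (ε * N) :=
    calc ‖∑ g ∈ F with ¬ good g, S g‖
        ≤ ∑ g ∈ F with ¬ good g, ε * N := norm_sum_le_of_le _ fun g hg =>
          hbad g (mem_filter.mp hg).1 (mem_filter.mp hg).2
      _ ≤ #F * (ε * N) := by
          rw [sum_const, nsmul_eq_mul]
          gcongr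
          exact filter_subset _ _
  rw [← Real.norm_eq_abs, ← Complex.norm_real, herror, norm_div, norm_mul,
    Complex.norm_natCast, Complex.norm_real, Real.norm_of_nonneg hN.le,
    div_le_iff₀ (by positivity)]
  linarith

lemma depSet_subset_piFinset_range (p k d : ℕ) {ι μ : Type*} [Fintype ι] [Fintype μ]
    [DecidableEq μ] (L : μ → ι → ZMod p) :
    DepSet p k d L ⊆ Fintype.piFinset fun _ : μ => range (p ^ (k + 1)) := fun lam hlam => by
  simpa only [Fintype.coe_piFinset, coe_range, Set.mem_pi, Set.mem_univ, Set.mem_Iio,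
    true_implies] using hlam.1

section AtomCount

variable {p n m : ℕ} [NeZero p] {ι κ : Type*} [Fintype ι] [DecidableEq ι] [Fintype κ]
  (P : κ → (Fin n → ZMod p) → 𝕋) (L : Fin m → ι → ZMod p) (b : Fin m → κ → 𝕋)

/-- Up to normalisation, the Fourier coefficient at frequency `g` of the indicator of the
points `x` with `(P_i(L_j x))_i = b_j` for all `j`. -/
def atomExpSum (g : κ → Fin m → ℕ) : ℂ :=
  ∑ x : ι → Fin n → ZMod p, ee (∑ i, ∑ j, g i j • (P i (formApply (L j) x) - b j i))

lemma natCard_atoms_eq_sum_atomExpSum [DecidableEq κ] {k : κ → ℕ}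
    (hP : ∀ i y, p ^ (k i + 1) • P i y = 0) (hb : ∀ i j, p ^ (k i + 1) • b j i = 0) :
    (Nat.card {x : ι → Fin n → ZMod p // ∀ j i, P i (formApply (L j) x) = b j i} : ℂ) =
      (∑ g ∈ Fintype.piFinset fun i => Fintype.piFinset fun _ : Fin m => range (p ^ (k i + 1)),
          atomExpSum P L b g) /
        #(Fintype.piFinset fun i => Fintype.piFinset fun _ : Fin m => range (p ^ (k i + 1))) := by
  rw [Nat.card_eq_fintype_card, Fintype.card_subtype]
  convert card_filter_forall_eq_zero_eq_sum_ee (fun i => p ^ (k i + 1))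
    (fun i => pow_pos (Nat.pos_of_neZero p) _) (fun x i j => P i (formApply (L j) x) - b j i)
    (fun x i j => by rw [nsmul_sub, hP, hb, sub_zero]) using 3
  · ext x
    simp only [mem_filter, mem_univ, true_and, sub_eq_zero]
    exact forall_comm
  · rfl
  · simp [Fintype.card_piFinset]

lemma atomExpSum_eq_card_of_mem_depSet {dd k : κ → ℕ} (hdeg : ∀ i, ExactDeg (dd i) (P i))
    (hdepth : ∀ i, ExactDepth p (k i) (P i)) (hcons : ConsistentWith p L dd k b)
    {g : κ → Fin m → ℕ} (hg : ∀ i, g i ∈ DepSet p (k i) (dd i) L) :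
    atomExpSum P L b g = Fintype.card (ι → Fin n → ZMod p) := by
  have hzero : ∀ x : ι → Fin n → ZMod p,
      ∑ i, ∑ j, g i j • (P i (formApply (L j) x) - b j i) = 0 := fun x => by
    simp only [nsmul_sub, sum_sub_distrib]
    rw [sub_eq_zero, sum_eq_zero fun i _ => (hg i).2 n (P i) (hdeg i) (hdepth i) x,
      sum_eq_zero fun i _ => (hcons i).2 (g i) (hg i)]
  simp [atomExpSum, hzero, ee_zero]

lemma norm_atomExpSum (g : κ → Fin m → ℕ) :
    ‖atomExpSum P L b g‖ = Fintype.card (ι → Fin n → ZMod p) *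
      ‖cavg fun x : ι → Fin n → ZMod p => ee (∑ i, ∑ j, g i j • P i (formApply (L j) x))‖ := by
  simp only [atomExpSum, nsmul_sub, sum_sub_distrib, norm_sum_ee_sub]

end AtomCount

theorem affine_equidistribution_general (p : ℕ) [Fact p.Prime] (n C m ℓ : ℕ)
    (ε : ℝ) (hε : 0 < ε)
    (P : Fin C → (Fin n → ZMod p) → 𝕋) (dd k : Fin C → ℕ)
    (hdeg : ∀ i, ExactDeg (dd i) (P i))
    (hdepth : ∀ i, ExactDepth p (k i) (P i))
    (L : Fin m → Fin (ℓ + 1) → ZMod p)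
    (b : Fin m → Fin C → 𝕋)
    (hcons : ConsistentWith p L dd k b)
    (hortho : ∀ lam : Fin C → Fin m → ℕ, (∀ i j, lam i j < p ^ (k i + 1)) →
      ((∀ x : Fin (ℓ + 1) → Fin n → ZMod p,
          (∑ i, ∑ j, lam i j • P i (formApply (L j) x)) = 0)
        ↔ ∀ i, lam i ∈ DepSet p (k i) (dd i) L) ∧
      (¬ (∀ x : Fin (ℓ + 1) → Fin n → ZMod p,
          (∑ i, ∑ j, lam i j • P i (formApply (L j) x)) = 0) →
        ‖(cavg fun x : Fin (ℓ + 1) → Fin n → ZMod p =>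
          ee (∑ i, ∑ j, lam i j • P i (formApply (L j) x)))‖ < ε)) :
    |(Nat.card {x : Fin (ℓ + 1) → Fin n → ZMod p //
          ∀ j i, P i (formApply (L j) x) = b j i} : ℝ) /
        (Fintype.card (Fin (ℓ + 1) → Fin n → ZMod p) : ℝ)
      - (∏ i, (Set.ncard (DepSet p (k i) (dd i) L) : ℝ)) /
          (∏ i, (p : ℝ) ^ (k i + 1)) ^ m| ≤ ε := by
  classical
  set F := Fintype.piFinset fun i => Fintype.piFinset fun _ : Fin m => range (p ^ (k i + 1))
  have hcardF : #F = (∏ i, p ^ (k i + 1)) ^ m := by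
    simp [F, Fintype.card_piFinset, prod_pow]
  have hcardgood : #{g ∈ F | ∀ i, g i ∈ DepSet p (k i) (dd i) L} =
      ∏ i, (DepSet p (k i) (dd i) L).ncard := by
    convert card_filter_forall_mem_piFinset _ _ fun i =>
      depSet_subset_piFinset_range p (k i) (dd i) L
  have hbad : ∀ g ∈ F, ¬ (∀ i, g i ∈ DepSet p (k i) (dd i) L) →
      ‖atomExpSum P L b g‖ ≤ ε * Fintype.card (Fin (ℓ + 1) → Fin n → ZMod p) := by
    intro g hgF hg
    obtain ⟨hzero, hsmall⟩ := hortho g (by simpa [F] using hgF)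
    rw [norm_atomExpSum, mul_comm ε]
    exact mul_le_mul_of_nonneg_left (hsmall (mt hzero.mp hg)).le (Nat.cast_nonneg _)
  have key := abs_div_sub_card_filter_div_le _ _
    (natCard_atoms_eq_sum_atomExpSum P L b (fun i => (hdepth i).1) fun i => (hcons i).1)
    (by positivity) hε.le
    (fun g _ hg => atomExpSum_eq_card_of_mem_depSet P L b hdeg hdepth hcons hg) hbad
  rw [hcardgood, hcardF] at key
  exact_mod_cast key

/-- equidistribution over an affine constraint. For a factor of rank
> `rε` (with `rε` from the bias-implies-low-rank theorem, and assuming the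
near-orthogonality theorem `hortho`), and atoms `b_1,…,b_m` consistent with `A`,
`Pr_x[∀ j, B(L_j(x)) = b_j] = (∏_i |Λ_i|)/‖B‖^m ± ε`. -/
theorem affine_equidistribution (p : ℕ) [Fact p.Prime] (n C d m ℓ : ℕ)
    (ε : ℝ) (hε : 0 < ε) (rε : ℕ)
    (P : Fin C → (Fin n → ZMod p) → 𝕋) (dd k : Fin C → ℕ)
    (hdle : ∀ i, dd i ≤ d)
    (hdeg : ∀ i, ExactDeg (dd i) (P i))
    (hdepth : ∀ i, ExactDepth p (k i) (P i))
    (hbias : ∀ Q : (Fin n → ZMod p) → 𝕋, IsPolyDeg d Q →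
      (rε : ℕ∞) < rankd (polyDeg Q) Q →
      ‖(cavg fun x => ee (Q x))‖ < ε)
    (hrank : FactorRankGT p P k rε)
    (L : Fin m → Fin (ℓ + 1) → ZMod p)
    (haff : ∀ j, L j 0 = 1)
    (b : Fin m → Fin C → 𝕋)
    (hcons : ConsistentWith p L dd k b)
    (hortho : ∀ lam : Fin C → Fin m → ℕ, (∀ i j, lam i j < p ^ (k i + 1)) →
      ((∀ x : Fin (ℓ + 1) → Fin n → ZMod p,
          (∑ i, ∑ j, lam i j • P i (formApply (L j) x)) = 0)
        ↔ ∀ i, lam i ∈ DepSet p (k i) (dd i) L) ∧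
      (¬ (∀ x : Fin (ℓ + 1) → Fin n → ZMod p,
          (∑ i, ∑ j, lam i j • P i (formApply (L j) x)) = 0) →
        ‖(cavg fun x : Fin (ℓ + 1) → Fin n → ZMod p =>
          ee (∑ i, ∑ j, lam i j • P i (formApply (L j) x)))‖ < ε)) :
    |(Nat.card {x : Fin (ℓ + 1) → Fin n → ZMod p //
          ∀ j i, P i (formApply (L j) x) = b j i} : ℝ) /
        (Fintype.card (Fin (ℓ + 1) → Fin n → ZMod p) : ℝ)
      - (∏ i, (Set.ncard (DepSet p (k i) (dd i) L) : ℝ)) /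
          (∏ i, (p : ℝ) ^ (k i + 1)) ^ m| ≤ ε :=
  affine_equidistribution_general p n C m ℓ ε hε P dd k hdeg hdepth L b hcons hortho
end
end
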